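/- Let V : Δ → ℝ be the maximum of finitely many affine functions, let C ⊆ Δ be a polytope with extreme points x_1,…,x_k, and suppose V is affine on each face of its induced subdivision. Let F place positive weights p_1,…,p_k on x_1,…,x_k (plus possibly mass elsewhere), and let F̂ collapse this mass to the barycenter x* of x_1,…,x_k with weights p_j. If E_F[V] = E_{F̂}[V], then V is affine on C. -/

import Mathlib

/-!
The barycenter `x*` lies in one cell, i.e. some affine piece `g₀` attains the maximum `V` at `x*`.
Since `g₀` is affine, `∑ pⱼ g₀(xⱼ) = (∑ pⱼ) g₀(x*) = (∑ pⱼ) V(x*) = ∑ pⱼ V(xⱼ)`, while `g₀ ≤ V`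
termwise; positivity of the weights forces `g₀(xⱼ) = V(xⱼ)` for every `j`. The set where `g₀`
dominates all other pieces is an intersection of half-spaces, hence convex, so it contains the
convex hull `C` of the `xⱼ`, and there `V = g₀`.
-/

open Finset

theorem AffineMap.map_centerMass {R E F ι : Type*} [Field R] [AddCommGroup E] [Module R E]
    [AddCommGroup F] [Module R F] (f : E →ᵃ[R] F) {t : Finset ι} {w : ι → R}
    (hw : ∑ i ∈ t, w i ≠ 0) (z : ι → E) :
    f (t.centerMass w z) = t.centerMass w (f ∘ z) := by
  set c := (∑ i ∈ t, w i)⁻¹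
  have hc : c ≠ 0 := inv_ne_zero hw
  have hsum : ∑ i ∈ t, (c • w) i = 1 := by
    simp only [Pi.smul_apply, smul_eq_mul, ← mul_sum, c, inv_mul_cancel₀ hw]
  rw [← t.centerMass_smul_left z hc, ← t.centerMass_smul_left (f ∘ z) hc,
    ← affineCombination_eq_centerMass hsum, ← affineCombination_eq_centerMass hsum,
    map_affineCombination _ _ _ hsum]

theorem AffineMap.sum_mul_map_centerMass {R E ι : Type*} [Field R] [AddCommGroup E] [Module R E]
    (f : E →ᵃ[R] R) {t : Finset ι} {w : ι → R} (hw : ∑ i ∈ t, w i ≠ 0) (z : ι → E) :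
    (∑ i ∈ t, w i) * f (t.centerMass w z) = ∑ i ∈ t, w i * f (z i) := by
  rw [f.map_centerMass hw, centerMass, smul_eq_mul, mul_inv_cancel_left₀ hw]
  rfl

theorem convex_setOf_forall_le_affineMap {E I : Type*} [AddCommGroup E] [Module ℝ E]
    (g : I → E →ᵃ[ℝ] ℝ) (i₀ : I) : Convex ℝ {y | ∀ i, g i y ≤ g i₀ y} := by
  simp only [Set.ofPred_forall]
  refine convex_iInter fun i => ?_
  simpa only [Set.preimage, Set.mem_Iic, AffineMap.coe_sub, Pi.sub_apply, sub_nonpos] using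
    (convex_Iic (0 : ℝ)).affine_preimage (g i - g i₀)

theorem exists_affineMap_eq_on_convexHull_of_sum_mul_eq {E ι I : Type*} [AddCommGroup E]
    [Module ℝ E] [Fintype ι] [Fintype I] [Nonempty I] (g : I → E →ᵃ[ℝ] ℝ) {s : Set E}
    (hs : Convex ℝ s) (V : E → ℝ) (hV : ∀ y ∈ s, V y = univ.sup' univ_nonempty fun i => g i y)
    (x : ι → E) (hx : ∀ j, x j ∈ s) (p : ι → ℝ) (hp : ∀ j, 0 < p j)
    (heq : ∑ j, p j * V (x j) = (∑ j, p j) * V (univ.centerMass p x)) :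
    ∃ i₀, ∀ y ∈ convexHull ℝ (Set.range x), V y = g i₀ y := by
  rcases isEmpty_or_nonempty ι with hι | hι
  · exact ⟨Classical.arbitrary I, by simp [Set.range_eq_empty]⟩
  have hpos : 0 < ∑ j, p j := sum_pos (fun j _ => hp j) univ_nonempty
  have hxstar : univ.centerMass p x ∈ s :=
    hs.centerMass_mem (fun j _ => (hp j).le) hpos fun j _ => hx j
  obtain ⟨i₀, -, hi₀⟩ := exists_mem_eq_sup' univ_nonempty fun i => g i (univ.centerMass p x)
  have hle : ∀ j i, g i (x j) ≤ V (x j) := fun j i => by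
    rw [hV (x j) (hx j)]
    exact le_sup' (fun i => g i (x j)) (mem_univ i)
  have hactive : ∀ j, g i₀ (x j) = V (x j) := by
    have hsum : ∑ j, p j * g i₀ (x j) = ∑ j, p j * V (x j) := by
      rw [heq, hV _ hxstar, hi₀, (g i₀).sum_mul_map_centerMass hpos.ne']
    have hterm := (sum_eq_sum_iff_of_le fun j _ =>
      mul_le_mul_of_nonneg_left (hle j i₀) (hp j).le).mp hsum
    exact fun j => mul_left_cancel₀ (hp j).ne' (hterm j (mem_univ j))
  have hhull : convexHull ℝ (Set.range x) ⊆ s ∩ {y | ∀ i, g i y ≤ g i₀ y} :=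
    convexHull_min (Set.range_subset_iff.2 fun j => ⟨hx j, fun i => (hle j i).trans (hactive j).ge⟩)
      (hs.inter (convex_setOf_forall_le_affineMap g i₀))
  refine ⟨i₀, fun y hy => ?_⟩
  obtain ⟨hys, hmax⟩ := hhull hy
  rw [hV y hys]
  exact le_antisymm (sup'_le _ _ fun i _ => hmax i) (le_sup' (fun i => g i y) (mem_univ i₀))

/-- If V is the max of finitely many affine functions, C is the polytope spanned
by x_1,…,x_k (its extreme points), all weights p_j are positive, and collapsing this mass to
the barycenter leaves the expectation of V unchanged, then V is affine on C. -/
theorem stmt4 {Θ : Type*} [Fintype Θ] {I : Type*} [Fintype I] [Nonempty I] {k : ℕ}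
    (α : I → Θ → ℝ) (β : I → ℝ) (V : (Θ → ℝ) → ℝ)
    (hV : ∀ x ∈ stdSimplex ℝ Θ,
      V x = Finset.univ.sup' Finset.univ_nonempty (fun i => ∑ θ, α i θ * x θ + β i))
    (x : Fin k → (Θ → ℝ)) (hxΔ : ∀ j, x j ∈ stdSimplex ℝ Θ)
    (C : Set (Θ → ℝ)) (hCdef : C = convexHull ℝ (Set.range x))
    (p : Fin k → ℝ) (hp : ∀ j, 0 < p j)
    (xstar : Θ → ℝ) (hxstar : xstar = (∑ j, p j)⁻¹ • ∑ j, p j • x j)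
    (heq : ∑ j, p j * V (x j) = (∑ j, p j) * V xstar) :
    ∃ (a : Θ → ℝ) (b : ℝ), ∀ y ∈ C, V y = ∑ θ, a θ * y θ + b := by
  let g : I → (Θ → ℝ) →ᵃ[ℝ] ℝ := fun i =>
    (dotProductBilin ℝ ℝ (α i)).toAffineMap + AffineMap.const ℝ (Θ → ℝ) (β i)
  have hxstar' : xstar = univ.centerMass p x := hxstar
  obtain ⟨i₀, hi₀⟩ := exists_affineMap_eq_on_convexHull_of_sum_mul_eq g
    (convex_stdSimplex ℝ Θ) V hV x hxΔ p hp (hxstar' ▸ heq)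
  exact ⟨α i₀, β i₀, hCdef ▸ hi₀⟩
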